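/- arXiv:1805.07455 — 6 statements merged into one kernel-verified Lean document; each statement's English description precedes it below -/
import Mathlib

section
/- In a finite distributive lattice L, for every element X and every join-irreducible element a that is admissible with respect to X, the closure of a at X equals the singleton {a}; that is, if a' is admissible with respect to X and X ∨ a = X ∨ a', then a' = a. -/
/-- An element `a` of a lattice with bottom is join-irreducible if `a ≠ ⊥` and
`a = X ⊔ Y` implies `a = X` or `a = Y`. -/
def JoinIrred {α : Type*} [Lattice α] [OrderBot α] (a : α) : Prop :=
  a ≠ ⊥ ∧ ∀ X Y : α, a = X ⊔ Y → a = X ∨ a = Y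

/-- A join-irreducible `a` is admissible with respect to `X` if `a ≰ X` and every
join-irreducible `a' < a` satisfies `a' ≤ X`. -/
def Admissible {α : Type*} [Lattice α] [OrderBot α] (a X : α) : Prop :=
  JoinIrred a ∧ ¬ a ≤ X ∧ ∀ a' : α, JoinIrred a' → a' < a → a' ≤ X

lemma le_of_joinirred_aux {α : Type*} [DistribLattice α] [OrderBot α]
    (X b c : α) (hb : Admissible b X) (h : b ≤ X ⊔ c) : b ≤ c := by
  have hb' : b = (b ⊓ X) ⊔ (b ⊓ c) := by
    rw [← inf_sup_left]
    exact (inf_eq_left.mpr h).symm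
  rcases hb.1.2 _ _ hb' with h1 | h1
  · exact absurd (h1 ▸ inf_le_right) hb.2.1
  · exact h1 ▸ inf_le_right

/-- In a finite distributive lattice, the closure of an admissible join-irreducible
`a` at `X` is the singleton `{a}`: if `a'` is also admissible with respect to `X`
and `X ⊔ a = X ⊔ a'`, then `a' = a`. -/
theorem closure_singleton_of_distrib {α : Type*} [DistribLattice α] [OrderBot α] [Fintype α]
    (X a a' : α) (ha : Admissible a X) (ha' : Admissible a' X)
    (hjoin : X ⊔ a = X ⊔ a') : a' = a := by
  have h1 : a' ≤ a := le_of_joinirred_aux X a' a ha' (hjoin ▸ le_sup_right)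
  have h2 : a ≤ a' := le_of_joinirred_aux X a a' ha (hjoin ▸ le_sup_right)
  exact le_antisymm h1 h2
end

section
/- Let u₁,…,u_N be unit vectors in ℝ^d with pairwise inner products bounded in absolute value by ε, where dε < 1. Then for any two vectors u in span of a subset S and u' in span of a disjoint subset T of {u₁,…,u_N} with ‖u‖ = ‖u'‖ = 1, one has |⟨u, u'⟩| ≤ dε/(1 − dε). -/
open RealInnerProductSpace

private lemma coeff_sq_bound (d : ℕ) (ε : ℝ) (hε : 0 ≤ ε)
    (hdε : (d : ℝ) * ε < 1)
    {N : ℕ} (u : Fin N → EuclideanSpace ℝ (Fin d))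
    (hunit : ∀ i, ‖u i‖ = 1)
    (hcoh : ∀ i j, i ≠ j → |⟪u i, u j⟫| ≤ ε)
    (S : Finset (Fin N)) (hcard : S.card ≤ d)
    (a : Fin N → ℝ) (hnorm : ‖∑ i ∈ S, a i • u i‖ = 1) :
    (∑ i ∈ S, |a i|) ^ 2 ≤ (d : ℝ) / (1 - (d : ℝ) * ε) := by
  set v := ∑ i ∈ S, a i • u i with hv
  have hvv : ⟪v, v⟫ = 1 := by
    rw [real_inner_self_eq_norm_sq, hnorm]; norm_num
  have hexp : ⟪v, v⟫ = ∑ i ∈ S, ∑ j ∈ S, a i * a j * ⟪u i, u j⟫ := by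
    rw [hv, sum_inner]
    refine Finset.sum_congr rfl fun i _ => ?_
    rw [inner_sum]
    refine Finset.sum_congr rfl fun j _ => ?_
    rw [real_inner_smul_left, real_inner_smul_right]; ring
  -- split the diagonal
  have hsplit : ∀ i ∈ S, ∑ j ∈ S, a i * a j * ⟪u i, u j⟫
      = a i ^ 2 + ∑ j ∈ S.erase i, a i * a j * ⟪u i, u j⟫ := by
    intro i hi
    rw [← Finset.add_sum_erase _ _ hi]
    have : ⟪u i, u i⟫ = 1 := by
      rw [real_inner_self_eq_norm_sq, hunit i]; norm_num
    rw [this]; ring_nf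
  set s2 := ∑ i ∈ S, a i ^ 2 with hs2
  set A := ∑ i ∈ S, |a i| with hA
  have hA0 : 0 ≤ A := Finset.sum_nonneg fun i _ => abs_nonneg _
  have hs2A : s2 ≤ A ^ 2 := by
    have : A ^ 2 = ∑ i ∈ S, ∑ j ∈ S, |a i| * |a j| := by
      rw [hA, sq, Finset.sum_mul_sum]
    rw [this, hs2]
    refine Finset.sum_le_sum fun i hi => ?_
    rw [← Finset.add_sum_erase _ _ hi]
    have h1 : a i ^ 2 = |a i| * |a i| := by rw [← abs_mul, ← sq, abs_sq]
    nlinarith [Finset.sum_nonneg (fun j (_ : j ∈ S.erase i) => mul_nonneg (abs_nonneg (a i)) (abs_nonneg (a j)))]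
  -- |off-diagonal| ≤ ε * (A^2 - s2)
  have hR : |∑ i ∈ S, ∑ j ∈ S.erase i, a i * a j * ⟪u i, u j⟫|
      ≤ ε * (A ^ 2 - s2) := by
    have hAs : A ^ 2 - s2 = ∑ i ∈ S, ∑ j ∈ S.erase i, |a i| * |a j| := by
      have : A ^ 2 = ∑ i ∈ S, ∑ j ∈ S, |a i| * |a j| := by
        rw [hA, sq, Finset.sum_mul_sum]
      rw [this, hs2, ← Finset.sum_sub_distrib]
      refine Finset.sum_congr rfl fun i hi => ?_
      rw [← Finset.add_sum_erase _ _ hi]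
      have h1 : a i ^ 2 = |a i| * |a i| := by rw [← abs_mul, ← sq, abs_sq]
      rw [h1]; ring
    rw [hAs, Finset.mul_sum]
    refine (Finset.abs_sum_le_sum_abs _ _).trans (Finset.sum_le_sum fun i _ => ?_)
    rw [Finset.mul_sum]
    refine (Finset.abs_sum_le_sum_abs _ _).trans (Finset.sum_le_sum fun j hj => ?_)
    have hij : i ≠ j := (Finset.ne_of_mem_erase hj).symm
    rw [abs_mul, abs_mul]
    have := hcoh i j hij
    have habs : 0 ≤ |a i| * |a j| := mul_nonneg (abs_nonneg _) (abs_nonneg _)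
    calc |a i| * |a j| * |⟪u i, u j⟫| ≤ |a i| * |a j| * ε :=
          mul_le_mul_of_nonneg_left this habs
      _ = ε * (|a i| * |a j|) := by ring
  have hone : 1 = s2 + ∑ i ∈ S, ∑ j ∈ S.erase i, a i * a j * ⟪u i, u j⟫ := by
    rw [← hvv, hexp, Finset.sum_congr rfl hsplit, Finset.sum_add_distrib]
  have hs2le : s2 ≤ 1 + ε * A ^ 2 := by
    have h1 := abs_le.mp hR
    have hs20 : 0 ≤ s2 := Finset.sum_nonneg fun i _ => sq_nonneg _
    nlinarith [mul_nonneg hε hs20]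
  have hCS : A ^ 2 ≤ (d : ℝ) * s2 := by
    have := sq_sum_le_card_mul_sum_sq (s := S) (f := fun i => |a i|)
    have hsq : ∀ i ∈ S, |a i| ^ 2 = a i ^ 2 := fun i _ => sq_abs _
    rw [Finset.sum_congr rfl hsq] at this
    calc A ^ 2 ≤ (S.card : ℝ) * s2 := by exact_mod_cast this
      _ ≤ (d : ℝ) * s2 := by
        apply mul_le_mul_of_nonneg_right _ (Finset.sum_nonneg fun i _ => sq_nonneg _)
        exact_mod_cast hcard
  have hpos : 0 < 1 - (d : ℝ) * ε := by linarith
  rw [le_div_iff₀ hpos]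
  nlinarith [sq_nonneg A, mul_nonneg hε (sq_nonneg A)]

private lemma exists_coeffs {d N : ℕ} (u : Fin N → EuclideanSpace ℝ (Fin d))
    (S : Finset (Fin N)) (v : EuclideanSpace ℝ (Fin d))
    (hv : v ∈ Submodule.span ℝ (u '' ↑S)) :
    ∃ a : Fin N → ℝ, v = ∑ i ∈ S, a i • u i := by
  rw [Finsupp.mem_span_image_iff_linearCombination] at hv
  obtain ⟨l, hl, rfl⟩ := hv
  refine ⟨l, ?_⟩
  rw [Finsupp.linearCombination_apply]
  exact Finsupp.sum_of_support_subset l hl _ (by simp)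

/-- Mutual coherence bound for the lattice of spanned subspaces: if `u₁, …, u_N` are
unit vectors in `ℝ^d` with pairwise inner products at most `ε` in absolute value and
`d * ε < 1`, then any unit vectors in the spans of two disjoint (linearly independent)
subfamilies have inner product at most `d * ε / (1 - d * ε)` in absolute value. -/
theorem mutual_coherence_of_spans (d N : ℕ) (ε : ℝ) (hε : 0 ≤ ε)
    (u : Fin N → EuclideanSpace ℝ (Fin d))
    (hunit : ∀ i, ‖u i‖ = 1)
    (hcoh : ∀ i j, i ≠ j → |⟪u i, u j⟫| ≤ ε)
    (hdε : (d : ℝ) * ε < 1)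
    (S T : Finset (Fin N)) (hST : Disjoint S T)
    (hSind : LinearIndependent ℝ (fun i : S => u i))
    (hTind : LinearIndependent ℝ (fun j : T => u j))
    (v w : EuclideanSpace ℝ (Fin d))
    (hv : v ∈ Submodule.span ℝ (u '' ↑S)) (hw : w ∈ Submodule.span ℝ (u '' ↑T))
    (hvn : ‖v‖ = 1) (hwn : ‖w‖ = 1) :
    |⟪v, w⟫| ≤ (d : ℝ) * ε / (1 - (d : ℝ) * ε) := by
  have hScard : S.card ≤ d := by
    have := hSind.fintype_card_le_finrank
    simpa [finrank_euclideanSpace_fin] using this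
  have hTcard : T.card ≤ d := by
    have := hTind.fintype_card_le_finrank
    simpa [finrank_euclideanSpace_fin] using this
  obtain ⟨a, rfl⟩ := exists_coeffs u S v hv
  obtain ⟨b, rfl⟩ := exists_coeffs u T w hw
  set A := ∑ i ∈ S, |a i| with hA
  set B := ∑ j ∈ T, |b j| with hB
  have hA0 : 0 ≤ A := Finset.sum_nonneg fun i _ => abs_nonneg _
  have hB0 : 0 ≤ B := Finset.sum_nonneg fun i _ => abs_nonneg _
  have hAbd := coeff_sq_bound d ε hε hdε u hunit hcoh S hScard a hvn
  have hBbd := coeff_sq_bound d ε hε hdε u hunit hcoh T hTcard b hwn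
  have hcross : |⟪∑ i ∈ S, a i • u i, ∑ j ∈ T, b j • u j⟫| ≤ ε * (A * B) := by
    have hexp : ⟪∑ i ∈ S, a i • u i, ∑ j ∈ T, b j • u j⟫
        = ∑ i ∈ S, ∑ j ∈ T, a i * b j * ⟪u i, u j⟫ := by
      rw [sum_inner]
      refine Finset.sum_congr rfl fun i _ => ?_
      rw [inner_sum]
      refine Finset.sum_congr rfl fun j _ => ?_
      rw [real_inner_smul_left, real_inner_smul_right]; ring
    rw [hexp]
    have hAB : ε * (A * B) = ∑ i ∈ S, ∑ j ∈ T, ε * (|a i| * |b j|) := by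
      rw [hA, hB, Finset.sum_mul_sum]
      rw [Finset.mul_sum]
      refine Finset.sum_congr rfl fun i _ => ?_
      rw [Finset.mul_sum]
    rw [hAB]
    refine (Finset.abs_sum_le_sum_abs _ _).trans (Finset.sum_le_sum fun i hi => ?_)
    refine (Finset.abs_sum_le_sum_abs _ _).trans (Finset.sum_le_sum fun j hj => ?_)
    have hij : i ≠ j := fun h => (Finset.disjoint_left.mp hST hi) (h ▸ hj)
    rw [abs_mul, abs_mul]
    have := hcoh i j hij
    have habs : 0 ≤ |a i| * |b j| := mul_nonneg (abs_nonneg _) (abs_nonneg _)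
    calc |a i| * |b j| * |⟪u i, u j⟫| ≤ |a i| * |b j| * ε :=
          mul_le_mul_of_nonneg_left this habs
      _ = ε * (|a i| * |b j|) := by ring
  have hpos : 0 < 1 - (d : ℝ) * ε := by linarith
  refine hcross.trans ?_
  rw [div_eq_mul_inv, mul_comm ((d:ℝ)*ε)]
  rw [le_div_iff₀ hpos] at hAbd hBbd
  have hABle : A * B ≤ (d : ℝ) / (1 - (d : ℝ) * ε) := by
    rw [le_div_iff₀ hpos]
    nlinarith [sq_nonneg (A - B)]
  calc ε * (A * B) ≤ ε * ((d : ℝ) / (1 - (d : ℝ) * ε)) :=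
        mul_le_mul_of_nonneg_left hABle hε
    _ = (1 - (d : ℝ) * ε)⁻¹ * ((d : ℝ) * ε) := by field_simp
end

section
/- Let X ⊆ Y be subspaces of ℝ^d, let b be a unit vector with b ∉ Y and b orthogonal to both X and Y (i.e., b ∈ Y^⊥). Then for vectors u, w ∈ ℝ^d, (‖Π_{Ȳ} w‖² ⟨b,u⟩² − ‖Π_Y u‖² ⟨b,w⟩² − ⟨b,u⟩²⟨b,w⟩²) ≤ (‖Π_{X̄} w‖² ⟨b,u⟩² − ‖Π_X u‖² ⟨b,w⟩² − ⟨b,u⟩²⟨b,w⟩²), where X̄, Ȳ denote orthogonal complements and Π is orthogonal projection. -/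
open RealInnerProductSpace

theorem Submodule.norm_orthogonalProjectionOnto_apply_le_of_le {𝕜 E : Type*} [RCLike 𝕜]
    [NormedAddCommGroup E] [InnerProductSpace 𝕜 E] {U V : Submodule 𝕜 E}
    [U.HasOrthogonalProjection] [V.HasOrthogonalProjection] (h : U ≤ V) (x : E) :
    ‖U.orthogonalProjectionOnto x‖ ≤ ‖V.orthogonalProjectionOnto x‖ := by
  rw [← orthogonalProjectionOnto_starProjection_of_le h x]
  simpa only [starProjection_apply, norm_coe] using
    U.norm_orthogonalProjectionOnto_apply_le (V.starProjection x)

theorem quantum_cut_summand_ineq_general (d : ℕ)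
    (X Y : Submodule ℝ (EuclideanSpace ℝ (Fin d))) (hXY : X ≤ Y)
    (b : EuclideanSpace ℝ (Fin d))
    (u w : EuclideanSpace ℝ (Fin d)) :
    ‖Submodule.orthogonalProjectionOnto Yᗮ w‖ ^ 2 * ⟪b, u⟫ ^ 2 - ‖Submodule.orthogonalProjectionOnto Y u‖ ^ 2 * ⟪b, w⟫ ^ 2
        - ⟪b, u⟫ ^ 2 * ⟪b, w⟫ ^ 2 ≤
      ‖Submodule.orthogonalProjectionOnto Xᗮ w‖ ^ 2 * ⟪b, u⟫ ^ 2 - ‖Submodule.orthogonalProjectionOnto X u‖ ^ 2 * ⟪b, w⟫ ^ 2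
        - ⟪b, u⟫ ^ 2 * ⟪b, w⟫ ^ 2 := by
  have hperp := Submodule.norm_orthogonalProjectionOnto_apply_le_of_le (Submodule.orthogonal_le hXY) w
  have hproj := Submodule.norm_orthogonalProjectionOnto_apply_le_of_le hXY u
  gcongr

/-- Key summand inequality for downward DR-submodularity of the quantum cut function:
for subspaces `X ⊆ Y` of `ℝ^d` and a unit vector `b ∉ Y` with `b ∈ Yᗮ`,
`‖Π_{Ȳ} w‖²⟨b,u⟩² − ‖Π_Y u‖²⟨b,w⟩² − ⟨b,u⟩²⟨b,w⟩²
  ≤ ‖Π_{X̄} w‖²⟨b,u⟩² − ‖Π_X u‖²⟨b,w⟩² − ⟨b,u⟩²⟨b,w⟩²`. -/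
theorem quantum_cut_summand_ineq (d : ℕ)
    (X Y : Submodule ℝ (EuclideanSpace ℝ (Fin d))) (hXY : X ≤ Y)
    (b : EuclideanSpace ℝ (Fin d)) (hb : ‖b‖ = 1) (hbY : b ∉ Y) (hbYperp : b ∈ Yᗮ)
    (u w : EuclideanSpace ℝ (Fin d)) :
    ‖Submodule.orthogonalProjectionOnto Yᗮ w‖ ^ 2 * ⟪b, u⟫ ^ 2 - ‖Submodule.orthogonalProjectionOnto Y u‖ ^ 2 * ⟪b, w⟫ ^ 2
        - ⟪b, u⟫ ^ 2 * ⟪b, w⟫ ^ 2 ≤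
      ‖Submodule.orthogonalProjectionOnto Xᗮ w‖ ^ 2 * ⟪b, u⟫ ^ 2 - ‖Submodule.orthogonalProjectionOnto X u‖ ^ 2 * ⟪b, w⟫ ^ 2
        - ⟪b, u⟫ ^ 2 * ⟪b, w⟫ ^ 2 :=
  quantum_cut_summand_ineq_general d X Y hXY b u w
end

section
/- In a modular lattice where every element has finite height, if a is a join-irreducible element admissible with respect to X (a ≰ X and every join-irreducible a' < a satisfies a' ≤ X), then h(X ∨ a) = h(X) + 1, where h is the height function. -/
/-!
Finite heights make `<` well-founded, so every element is a finite join of join-irreducibles.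
Hence every `b < a` lies below `X`, i.e. `X ⊓ a ⋖ a`, and by modularity `X ⋖ X ⊔ a`. In a
modular lattice a cover raises the height by exactly one.
-/

open Order

lemma wellFoundedLT_of_height_ne_top {α : Type*} [Preorder α] (h : ∀ x : α, height x ≠ ⊤) :
    WellFoundedLT α :=
  ⟨Subrelation.wf (fun hxy => height_strictMono hxy (lt_top_iff_ne_top.2 (h _)))
    (InvImage.wf height wellFounded_lt)⟩

lemma SupIrred.joinIrred {α : Type*} [Lattice α] [OrderBot α] {a : α} (ha : SupIrred a) :
    JoinIrred a :=
  ⟨ha.ne_bot, fun _ _ h => (ha.2 h.symm).imp Eq.symm Eq.symm⟩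

lemma le_of_forall_supIrred_le {α : Type*} [Lattice α] [OrderBot α] [WellFoundedLT α] {x y : α}
    (h : ∀ b, SupIrred b → b ≤ y → b ≤ x) : y ≤ x := by
  obtain ⟨s, rfl, hs⟩ := exists_supIrred_decomposition y
  exact Finset.sup_le fun b hb => h b (hs hb) (Finset.le_sup (f := id) hb)

lemma inf_covBy_of_forall_lt_le {α : Type*} [Lattice α] {a x : α} (hax : ¬ a ≤ x)
    (h : ∀ b < a, b ≤ x) : x ⊓ a ⋖ a :=
  ⟨inf_lt_right.2 hax, fun c hc hca => hc.not_ge (le_inf (h c hca) hca.le)⟩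

/-- Induction on `y`: a `z < y` not below `x` satisfies `x ⊔ z = y`, so by modularity
`x ⊓ z ⋖ z`, and `x ⊓ z < x` since otherwise `y = x ⊔ z = z`. -/
lemma CovBy.height_le_height_add_one {α : Type*} [Lattice α] [IsModularLattice α]
    [WellFoundedLT α] {x y : α} (hxy : x ⋖ y) : height y ≤ height x + 1 := by
  induction y using WellFoundedLT.induction generalizing x with
  | _ y ih =>
  rw [height_eq_iSup_lt_height]
  refine iSup₂_le fun z hzy => add_le_add_left ?_ 1
  by_cases hzx : z ≤ x
  · exact height_mono hzx
  have hsup : x ⊔ z = y :=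
    (hxy.eq_or_eq le_sup_left (sup_le hxy.le hzy.le)).resolve_left
      fun h => hzx (h ▸ le_sup_right)
  have hinf : x ⊓ z < x :=
    inf_lt_left.2 fun hxz => hzy.not_ge (hsup ▸ sup_le hxz le_rfl)
  calc height z ≤ height (x ⊓ z) + 1 := ih z hzy (inf_covBy_of_covBy_sup_left (hsup ▸ hxy))
    _ ≤ height x := height_add_one_le hinf

lemma CovBy.height_eq_add_one {α : Type*} [Lattice α] [IsModularLattice α]
    [WellFoundedLT α] {x y : α} (hxy : x ⋖ y) : height y = height x + 1 :=
  le_antisymm hxy.height_le_height_add_one (height_add_one_le hxy.lt)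

theorem height_join_admissible_general {α : Type*} [Lattice α] [OrderBot α] [IsModularLattice α]
    (hfin : ∀ x : α, Order.height x ≠ ⊤)
    (X a : α) (haX : ¬ a ≤ X)
    (hadm : ∀ a' : α, JoinIrred a' → a' < a → a' ≤ X) :
    Order.height (X ⊔ a) = Order.height X + 1 := by
  have : WellFoundedLT α := wellFoundedLT_of_height_ne_top hfin
  have hlt : ∀ b < a, b ≤ X := fun b hb =>
    le_of_forall_supIrred_le fun c hc hcb => hadm c hc.joinIrred (hcb.trans_lt hb)
  exact (covBy_sup_of_inf_covBy_right (inf_covBy_of_forall_lt_le haX hlt)).height_eq_add_one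

/-- In a modular lattice in which every element has finite height, joining an
admissible join-irreducible element `a` to `X` increases the height by exactly one. -/
theorem height_join_admissible {α : Type*} [Lattice α] [OrderBot α] [IsModularLattice α]
    (hfin : ∀ x : α, Order.height x ≠ ⊤)
    (X a : α) (ha : JoinIrred a) (haX : ¬ a ≤ X)
    (hadm : ∀ a' : α, JoinIrred a' → a' < a → a' ≤ X) :
    Order.height (X ⊔ a) = Order.height X + 1 :=
  height_join_admissible_general hfin X a haX hadm
end

section
/- Suppose nonnegative reals satisfy, for i = 1,…,n: D_i ≤ G_i + δ, where D_i = g(i−1) − g(i) for a function g given by g(i) = f(OPT_i) with g(0) = f(OPT) and g(n) = f(ALG), and G_i = (f(A_i) + f(B_i)) − (f(A_{i−1}) + f(B_{i−1})) with A_0 = ⊥, B_0 = ⊤, A_n = B_n = ALG. Then f(OPT) − f(ALG) ≤ 2f(ALG) − f(⊥) − f(⊤) + nδ; consequently, if f ≥ 0 then f(ALG) ≥ (1/3)f(OPT) − (n/3)δ. -/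
/-- Telescoping step of the double-greedy analysis: if each per-iteration damage
`g (i-1) - g i` is bounded by the per-iteration gain plus `δ`, where `g 0 = f(OPT)`,
`g n = f(ALG)`, `a 0 = f(⊥)`, `b 0 = f(⊤)`, `a n = b n = f(ALG)`, then
`f(OPT) − f(ALG) ≤ 2 f(ALG) − f(⊥) − f(⊤) + n δ`; and if `f(⊥), f(⊤) ≥ 0` then
`f(ALG) ≥ f(OPT)/3 − (n/3) δ`. -/
theorem double_greedy_telescope (n : ℕ) (δ : ℝ) (hδ : 0 ≤ δ)
    (g a b : ℕ → ℝ) (fOPT fALG fBot fTop : ℝ)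
    (hg0 : g 0 = fOPT) (hgn : g n = fALG)
    (ha0 : a 0 = fBot) (hb0 : b 0 = fTop)
    (han : a n = fALG) (hbn : b n = fALG)
    (hdamage : ∀ i < n, g i - g (i + 1) ≤ (a (i + 1) + b (i + 1)) - (a i + b i) + δ) :
    fOPT - fALG ≤ 2 * fALG - fBot - fTop + n * δ ∧
      (0 ≤ fBot → 0 ≤ fTop → fALG ≥ (1 / 3) * fOPT - ((n : ℝ) / 3) * δ) := by
  have hsum : ∑ i ∈ Finset.range n, (g i - g (i + 1)) ≤
      ∑ i ∈ Finset.range n, ((a (i + 1) + b (i + 1)) - (a i + b i) + δ) := by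
    apply Finset.sum_le_sum
    intro i hi
    exact hdamage i (Finset.mem_range.mp hi)
  have h1 : ∑ i ∈ Finset.range n, (g i - g (i + 1)) = g 0 - g n :=
    Finset.sum_range_sub' g n
  have h2 : ∑ i ∈ Finset.range n, ((a (i + 1) + b (i + 1)) - (a i + b i) + δ)
      = ((a n + b n) - (a 0 + b 0)) + n * δ := by
    rw [Finset.sum_add_distrib, Finset.sum_range_sub (fun i => a i + b i) n,
      Finset.sum_const, Finset.card_range, nsmul_eq_mul]
  have key : fOPT - fALG ≤ 2 * fALG - fBot - fTop + n * δ := by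
    rw [h1, h2, hg0, hgn, ha0, hb0, han, hbn] at hsum
    linarith
  refine ⟨key, fun h1 h2 => ?_⟩
  linarith
end

section
/- Let V = {u₁, u₂, u₃} ⊂ ℝ² with u₁ = (1,0), u₂ = (1/√(1+ε²), ε/√(1+ε²)), u₃ = (0,1), and let f(X) = ‖Π_X (0,1)‖² on subspaces X of ℝ². Then for X = span{(1,0)} and Y = span{(1,ε)}: f(X) = 0, f(X ∩ Y) = 0, f(X + Y) = 1, and f(Y) = ε²/(1+ε²); hence f(X) + f(Y) < f(X ∩ Y) + f(X + Y) for all ε with 0 < ε < 1, so f is not submodular on the subspace lattice. -/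
/-!
In `ℝ²` the lines `X = ℝ(1,0)` and `Y = ℝ(1,ε)` are distinct, so `X ⊓ Y = ⊥` and `X ⊔ Y = ⊤`.
Projecting `v = (0,1)` gives `f(⊥) = 0`, `f(⊤) = ‖v‖² = 1`, `f(X) = 0` since `v ⟂ X`, and
`f(Y) = ⟪(1,ε), v⟫² / ‖(1,ε)‖² = ε² / (1 + ε²) < 1`, so submodularity fails.
-/

open Module

namespace Submodule

section Lines

variable {K V : Type*} [DivisionRing K] [AddCommGroup V] [Module K V]

theorem span_singleton_inf_span_singleton_eq_bot {u w : V} (h : LinearIndependent K ![u, w]) :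
    (K ∙ u) ⊓ (K ∙ w) = ⊥ := by
  simpa [Set.image_singleton, disjoint_iff] using
    h.disjoint_span_image (s := {0}) (t := {1}) (by simp)

theorem span_singleton_sup_span_singleton_eq_top {u w : V} (h : LinearIndependent K ![u, w])
    (hV : finrank K V = 2) : (K ∙ u) ⊔ (K ∙ w) = ⊤ := by
  rw [← span_insert, ← Matrix.range_cons_cons_empty u w ![]]
  exact h.span_eq_top_of_card_eq_finrank (by simp [hV])

end Lines

variable {𝕜 E : Type*} [RCLike 𝕜] [NormedAddCommGroup E] [InnerProductSpace 𝕜 E]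

theorem norm_orthogonalProjectionOnto_span_singleton_sq (u v : E) :
    ‖(𝕜 ∙ u).orthogonalProjectionOnto v‖ ^ 2 = ‖(inner 𝕜 u v : 𝕜)‖ ^ 2 / ‖u‖ ^ 2 := by
  rcases eq_or_ne u 0 with rfl | hu
  · simp
  have hu' : ‖u‖ ≠ 0 := norm_ne_zero_iff.mpr hu
  rw [← norm_coe, ← starProjection_apply, starProjection_singleton, norm_smul, norm_div]
  simp only [map_pow, norm_pow, norm_algebraMap', norm_norm]
  field_simp

end Submodule

theorem EuclideanSpace.linearIndependent_pair_of_det_ne_zero {𝕜 : Type*} [RCLike 𝕜]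
    {a b c d : 𝕜} (h : a * d - b * c ≠ 0) : LinearIndependent 𝕜 ![!₂[a, b], !₂[c, d]] := by
  rw [LinearIndependent.pair_iff]
  intro s t hst
  have h0 : s * a + t * c = 0 := by simpa using congrArg (· 0) hst
  have h1 : s * b + t * d = 0 := by simpa using congrArg (· 1) hst
  have hs : s * (a * d - b * c) = 0 := by linear_combination d * h0 - c * h1
  have ht : t * (a * d - b * c) = 0 := by linear_combination a * h1 - b * h0
  exact ⟨(mul_eq_zero.mp hs).resolve_right h, (mul_eq_zero.mp ht).resolve_right h⟩

open Submodule in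
theorem pca_not_submodular_general (ε : ℝ) (hε : 0 < ε) :
    let e : (Fin 2 → ℝ) ≃ EuclideanSpace ℝ (Fin 2) := (WithLp.equiv 2 (Fin 2 → ℝ)).symm
    let v : EuclideanSpace ℝ (Fin 2) := e ![0, 1]
    let f : Submodule ℝ (EuclideanSpace ℝ (Fin 2)) → ℝ :=
      fun W => ‖W.orthogonalProjectionOnto v‖ ^ 2
    let X : Submodule ℝ (EuclideanSpace ℝ (Fin 2)) := ℝ ∙ e ![1, 0]
    let Y : Submodule ℝ (EuclideanSpace ℝ (Fin 2)) := ℝ ∙ e ![1, ε]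
    f X = 0 ∧ f (X ⊓ Y) = 0 ∧ f (X ⊔ Y) = 1 ∧ f Y = ε ^ 2 / (1 + ε ^ 2) ∧
      f X + f Y < f (X ⊓ Y) + f (X ⊔ Y) := by
  intro e v f X Y
  have hXY : LinearIndependent ℝ ![!₂[1, 0], !₂[1, ε]] :=
    EuclideanSpace.linearIndependent_pair_of_det_ne_zero (by simpa using hε.ne')
  have hfX : f X = 0 := by
    change ‖(ℝ ∙ !₂[(1 : ℝ), 0]).orthogonalProjectionOnto !₂[0, 1]‖ ^ 2 = 0
    rw [norm_orthogonalProjectionOnto_span_singleton_sq]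
    simp [PiLp.inner_apply]
  have hfY : f Y = ε ^ 2 / (1 + ε ^ 2) := by
    change ‖(ℝ ∙ !₂[1, ε]).orthogonalProjectionOnto !₂[0, 1]‖ ^ 2 = _
    rw [norm_orthogonalProjectionOnto_span_singleton_sq, EuclideanSpace.real_norm_sq_eq]
    simp [PiLp.inner_apply]
  have hfinf : f (X ⊓ Y) = 0 := by
    simp [f, X, Y, e, span_singleton_inf_span_singleton_eq_bot hXY]
  have hfsup : f (X ⊔ Y) = 1 := by
    change ‖(X ⊔ Y).orthogonalProjectionOnto !₂[0, 1]‖ ^ 2 = 1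
    rw [norm_orthogonalProjectionOnto_apply _
      (by simp [X, Y, e, span_singleton_sup_span_singleton_eq_top hXY finrank_euclideanSpace_fin]),
      EuclideanSpace.real_norm_sq_eq]
    simp
  refine ⟨hfX, hfinf, hfsup, hfY, ?_⟩
  rw [hfX, hfinf, hfsup, hfY, zero_add, zero_add, div_lt_one (by positivity)]
  linarith

/-- The PCA objective `f(X) = ‖Π_X (0,1)‖²` on subspaces of `ℝ²` is not submodular:
for `X = span{(1,0)}` and `Y = span{(1,ε)}` with `0 < ε < 1`, one has `f(X) = 0`,
`f(X ⊓ Y) = 0`, `f(X ⊔ Y) = 1`, `f(Y) = ε²/(1+ε²)`, and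
`f(X) + f(Y) < f(X ⊓ Y) + f(X ⊔ Y)`. -/
theorem pca_not_submodular (ε : ℝ) (hε : 0 < ε) (hε1 : ε < 1) :
    let e : (Fin 2 → ℝ) ≃ EuclideanSpace ℝ (Fin 2) := (WithLp.equiv 2 (Fin 2 → ℝ)).symm
    let v : EuclideanSpace ℝ (Fin 2) := e ![0, 1]
    let f : Submodule ℝ (EuclideanSpace ℝ (Fin 2)) → ℝ :=
      fun W => ‖W.orthogonalProjectionOnto v‖ ^ 2
    let X : Submodule ℝ (EuclideanSpace ℝ (Fin 2)) := ℝ ∙ e ![1, 0]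
    let Y : Submodule ℝ (EuclideanSpace ℝ (Fin 2)) := ℝ ∙ e ![1, ε]
    f X = 0 ∧ f (X ⊓ Y) = 0 ∧ f (X ⊔ Y) = 1 ∧ f Y = ε ^ 2 / (1 + ε ^ 2) ∧
      f X + f Y < f (X ⊓ Y) + f (X ⊔ Y) :=
  pca_not_submodular_general ε hε
end
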